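/- arXiv:math/0504074 — 4 statements merged into one kernel-verified Lean document; each statement's English description precedes it below -/
import Mathlib

section
/- Let F be a field of characteristic zero, let q ∈ F be nonzero, and let a, b, c ∈ F with a ≠ 0 and c ≠ 0. The quadratic form f = a·x² + b·x·y + c·y² in the quantum plane O_q(F²) is reducible if and only if there exists d ∈ F such that d² = b² − 4·a·c·q. -/
noncomputable section

/-- The defining relation of the quantum plane: `y * x = q • (x * y)`. -/
inductive QRel (F : Type) [Field F] (q : F) :
    FreeAlgebra F (Fin 2) → FreeAlgebra F (Fin 2) → Prop
  | rel : QRel F q (FreeAlgebra.ι F 1 * FreeAlgebra.ι F 0)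
      (q • (FreeAlgebra.ι F 0 * FreeAlgebra.ι F 1))

/-- The quantum plane `O_q(F²)`. -/
abbrev QPlane (F : Type) [Field F] (q : F) : Type := RingQuot (QRel F q)

/-- The generator `x` of the quantum plane. -/
def Qx (F : Type) [Field F] (q : F) : QPlane F q :=
  RingQuot.mkAlgHom F (QRel F q) (FreeAlgebra.ι F 0)

/-- The generator `y` of the quantum plane. -/
def Qy (F : Type) [Field F] (q : F) : QPlane F q :=
  RingQuot.mkAlgHom F (QRel F q) (FreeAlgebra.ι F 1)

/-- An element of the quantum plane is constant if it is in the image of the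
structure map `F → O_q(F²)`. -/
def IsConstQP (F : Type) [Field F] (q : F) (f : QPlane F q) : Prop :=
  f ∈ Set.range (algebraMap F (QPlane F q))

/-- A (nonzero) element is reducible if it is a product of two nonconstant elements. -/
def IsReducibleQP (F : Type) [Field F] (q : F) (f : QPlane F q) : Prop :=
  ∃ g h : QPlane F q, ¬ IsConstQP F q g ∧ ¬ IsConstQP F q h ∧ f = g * h

/-! The ordered monomials `x ^ i * y ^ j` form a basis of `O_q(F²)` (they act independently on
`F[X₀, X₁]`), and the product of two of them is a nonzero multiple of a single monomial since
`q ≠ 0`. So the degree-lexicographically largest, and likewise the smallest, monomials of two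
nonzero elements multiply to a monomial occurring in their product. Hence the factors of a
homogeneous quadratic form are homogeneous, and nonconstant factors are linear forms `αx + βy`,
`γx + δy`. Their product has coefficients `αγ`, `αδ + qβγ`, `βδ`, whose quantum discriminant is
`(αδ - qβγ)²`. Conversely, if `d² = b² - 4acq` then
`f = (x + (b - d) / (2qa) y) (a x + (b + d) / 2 y)`. -/

theorem pow_mul_pow_eq_smul_of_mul_eq_smul {R A : Type*} [CommSemiring R] [Semiring A]
    [Algebra R A] {x y : A} {q : R} (h : y * x = q • (x * y)) (j k : ℕ) :
    y ^ j * x ^ k = q ^ (j * k) • (x ^ k * y ^ j) := by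
  have hy (k : ℕ) : y * x ^ k = q ^ k • (x ^ k * y) := by
    induction k with
    | zero => simp
    | succ k ih =>
      rw [pow_succ, ← mul_assoc, ih, smul_mul_assoc, mul_assoc, h, mul_smul_comm, smul_smul,
        ← mul_assoc, ← pow_succ, pow_succ]
  induction j with
  | zero => simp
  | succ j ih =>
    rw [pow_succ, mul_assoc, hy, mul_smul_comm, ← mul_assoc, ih, smul_mul_assoc, smul_smul,
      mul_assoc, ← pow_succ, ← pow_add]
    congr 2
    ring

def degLexKey (s : ℕ × ℕ) : ℕ ×ₗ ℕ := toLex (s.1 + s.2, s.1)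

theorem degLexKey_add (s t : ℕ × ℕ) : degLexKey (s + t) = degLexKey s + degLexKey t := by
  simp only [degLexKey, Prod.fst_add, Prod.snd_add, ← toLex_add, Prod.mk_add_mk,
    add_add_add_comm]

theorem degLexKey_injective : Function.Injective degLexKey := fun s t hst => by
  simp only [degLexKey, toLex_inj, Prod.mk.injEq] at hst
  exact Prod.ext hst.2 (by omega)

theorem fst_add_snd_le_of_degLexKey_le {s t : ℕ × ℕ} (h : degLexKey s ≤ degLexKey t) :
    s.1 + s.2 ≤ t.1 + t.2 := by
  rw [degLexKey, degLexKey, Prod.Lex.toLex_le_toLex] at h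
  omega

theorem uniqueAdd_of_forall_degLexKey_le {A B : Finset (ℕ × ℕ)} {s t : ℕ × ℕ}
    (hA : ∀ a ∈ A, degLexKey a ≤ degLexKey s) (hB : ∀ b ∈ B, degLexKey b ≤ degLexKey t) :
    UniqueAdd A B s t := fun a b ha hb hab => by
  have := (add_eq_add_iff_eq_and_eq (hA a ha) (hB b hb)).1
    (by rw [← degLexKey_add, ← degLexKey_add, hab])
  exact ⟨degLexKey_injective this.1, degLexKey_injective this.2⟩

theorem uniqueAdd_of_forall_le_degLexKey {A B : Finset (ℕ × ℕ)} {s t : ℕ × ℕ}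
    (hA : ∀ a ∈ A, degLexKey s ≤ degLexKey a) (hB : ∀ b ∈ B, degLexKey t ≤ degLexKey b) :
    UniqueAdd A B s t := fun a b ha hb hab => by
  have := (add_eq_add_iff_eq_and_eq (hA a ha) (hB b hb)).1
    (by rw [← degLexKey_add, ← degLexKey_add, hab])
  exact ⟨(degLexKey_injective this.1).symm, (degLexKey_injective this.2).symm⟩

namespace QuantumPlane

variable (F : Type) [Field F] (q : F)

theorem Qy_mul_Qx : Qy F q * Qx F q = q • (Qx F q * Qy F q) := by
  simpa [Qx, Qy] using RingQuot.mkAlgHom_rel F (QRel.rel (F := F) (q := q))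

def monomial (s : ℕ × ℕ) : QPlane F q := Qx F q ^ s.1 * Qy F q ^ s.2

variable {F q} in
theorem monomial_mul_monomial (s t : ℕ × ℕ) :
    monomial F q s * monomial F q t = q ^ (s.2 * t.1) • monomial F q (s + t) := by
  rw [monomial, monomial, mul_assoc, ← mul_assoc (Qy F q ^ s.2),
    pow_mul_pow_eq_smul_of_mul_eq_smul (Qy_mul_Qx F q), smul_mul_assoc, mul_smul_comm]
  simp only [monomial, Prod.fst_add, Prod.snd_add, pow_add, mul_assoc]

theorem span_range_monomial : Submodule.span F (Set.range (monomial F q)) = ⊤ := by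
  set P := Submodule.span F (Set.range (monomial F q))
  have hmul : P * P ≤ P := by
    rw [Submodule.span_mul_span, Submodule.span_le]
    rintro _ ⟨_, ⟨s, rfl⟩, _, ⟨t, rfl⟩, rfl⟩
    dsimp only
    rw [monomial_mul_monomial]
    exact P.smul_mem _ (Submodule.subset_span ⟨s + t, rfl⟩)
  rw [eq_top_iff]
  rintro f -
  obtain ⟨f, rfl⟩ := RingQuot.mkAlgHom_surjective F (QRel F q) f
  induction f using FreeAlgebra.induction with
  | grade0 r =>
    rw [AlgHom.commutes, Algebra.algebraMap_eq_smul_one]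
    exact P.smul_mem r (Submodule.subset_span ⟨0, by simp [monomial]⟩)
  | grade1 i =>
    fin_cases i
    · exact Submodule.subset_span ⟨(1, 0), by simp [monomial, Qx]⟩
    · exact Submodule.subset_span ⟨(0, 1), by simp [monomial, Qy]⟩
  | mul a b ha hb => rw [map_mul]; exact hmul (Submodule.mul_mem_mul ha hb)
  | add a b ha hb => rw [map_add]; exact P.add_mem ha hb

section Representation

open MvPolynomial

def polynomialRep : QPlane F q →ₐ[F] Module.End F (MvPolynomial (Fin 2) F) :=
  RingQuot.liftAlgHom F ⟨FreeAlgebra.lift F ![LinearMap.mulLeft F (X 0),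
    LinearMap.mulLeft F (X 1) ∘ₗ (aeval ![q • X 0, X 1]).toLinearMap], by
      rintro _ _ ⟨⟩
      refine LinearMap.ext fun w => ?_
      simp [Algebra.smul_def]
      ring⟩

theorem polynomialRep_Qx (w : MvPolynomial (Fin 2) F) :
    polynomialRep F q (Qx F q) w = X 0 * w := by
  simp [polynomialRep, Qx, RingQuot.liftAlgHom_mkAlgHom_apply]

theorem polynomialRep_Qy (w : MvPolynomial (Fin 2) F) :
    polynomialRep F q (Qy F q) w = X 1 * aeval ![q • X 0, X 1] w := by
  simp [polynomialRep, Qy, RingQuot.liftAlgHom_mkAlgHom_apply]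

theorem polynomialRep_monomial_one (s : ℕ × ℕ) :
    polynomialRep F q (monomial F q s) 1 = X 0 ^ s.1 * X 1 ^ s.2 := by
  have hx (i : ℕ) (w) : (polynomialRep F q (Qx F q) ^ i) w = X 0 ^ i * w := by
    induction i with
    | zero => simp
    | succ i ih =>
      rw [pow_succ', Module.End.mul_apply, ih, polynomialRep_Qx, pow_succ', mul_assoc]
  have hy (j : ℕ) : (polynomialRep F q (Qy F q) ^ j) 1 = X 1 ^ j := by
    induction j with
    | zero => simp
    | succ j ih => simp [pow_succ', ih, polynomialRep_Qy]
  simp [monomial, hx, hy]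

theorem linearIndependent_monomial : LinearIndependent F (monomial F q) := by
  let e : ℕ × ℕ → Fin 2 →₀ ℕ := fun s => Finsupp.single 0 s.1 + Finsupp.single 1 s.2
  have he : Function.Injective e := fun s t hst => by
    have h0 := DFunLike.congr_fun hst 0
    have h1 := DFunLike.congr_fun hst 1
    simp only [e, Finsupp.add_apply, Finsupp.single_apply] at h0 h1
    exact Prod.ext (by simpa using h0) (by simpa using h1)
  let L := (LinearMap.applyₗ 1).comp (polynomialRep F q).toLinearMap
  have hL : L ∘ monomial F q = fun s => MvPolynomial.monomial (e s) 1 := by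
    ext1 s
    simp [L, polynomialRep_monomial_one, e, X_pow_eq_monomial, monomial_mul]
  refine LinearIndependent.of_comp L ?_
  rw [hL]
  exact (basisMonomials (Fin 2) F).linearIndependent.comp e he

end Representation

def monomialBasis : Module.Basis (ℕ × ℕ) F (QPlane F q) :=
  .mk (linearIndependent_monomial F q) (span_range_monomial F q).ge

@[simp] theorem monomialBasis_apply (s : ℕ × ℕ) : monomialBasis F q s = monomial F q s :=
  Module.Basis.mk_apply ..

def support (g : QPlane F q) : Finset (ℕ × ℕ) := ((monomialBasis F q).repr g).support

variable {F q}

theorem repr_monomial (s : ℕ × ℕ) :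
    (monomialBasis F q).repr (monomial F q s) = Finsupp.single s 1 := by
  rw [← monomialBasis_apply, Module.Basis.repr_self]

theorem repr_mul (g h : QPlane F q) :
    (monomialBasis F q).repr (g * h) =
      ((monomialBasis F q).repr g).sum fun s a => ((monomialBasis F q).repr h).sum fun t b =>
        Finsupp.single (s + t) (a * b * q ^ (s.2 * t.1)) := by
  conv_lhs => rw [← (monomialBasis F q).linearCombination_repr g,
    ← (monomialBasis F q).linearCombination_repr h]
  simp only [Finsupp.linearCombination_apply, Finsupp.sum_mul]
  simp only [Finsupp.mul_sum, smul_mul_smul_comm, monomialBasis_apply, monomial_mul_monomial,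
    smul_smul, map_finsuppSum, map_smul, repr_monomial, Finsupp.smul_single, smul_eq_mul, mul_one]

theorem repr_mul_add_of_uniqueAdd {g h : QPlane F q} {s t : ℕ × ℕ} (hs : s ∈ support F q g)
    (ht : t ∈ support F q h) (hst : UniqueAdd (support F q g) (support F q h) s t) :
    (monomialBasis F q).repr (g * h) (s + t) =
      (monomialBasis F q).repr g s * (monomialBasis F q).repr h t * q ^ (s.2 * t.1) := by
  rw [repr_mul]
  simp only [Finsupp.sum, Finsupp.finsetSum_apply, Finsupp.single_apply]
  rw [← Finset.sum_product', Finset.sum_eq_single (s, t)]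
  · simp
  · rintro ⟨s', t'⟩ hmem hne
    rw [Finset.mem_product] at hmem
    exact if_neg fun h => hne (Prod.ext_iff.2 (hst hmem.1 hmem.2 h))
  · exact fun h => absurd (Finset.mk_mem_product hs ht) h

theorem add_mem_support_mul (hq : q ≠ 0) {g h : QPlane F q} {s t : ℕ × ℕ}
    (hs : s ∈ support F q g) (ht : t ∈ support F q h)
    (hst : UniqueAdd (support F q g) (support F q h) s t) : s + t ∈ support F q (g * h) := by
  rw [support, Finsupp.mem_support_iff, repr_mul_add_of_uniqueAdd hs ht hst]
  exact mul_ne_zero (mul_ne_zero (Finsupp.mem_support_iff.1 hs) (Finsupp.mem_support_iff.1 ht))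
    (pow_ne_zero _ hq)

variable (F q) in
def IsHomogeneous (g : QPlane F q) (n : ℕ) : Prop := ∀ s ∈ support F q g, s.1 + s.2 = n

theorem IsHomogeneous.of_mul (hq : q ≠ 0) {g h : QPlane F q} (hg : g ≠ 0) (hh : h ≠ 0) {n : ℕ}
    (hgh : IsHomogeneous F q (g * h) n) :
    ∃ m k, m + k = n ∧ IsHomogeneous F q g m ∧ IsHomogeneous F q h k := by
  have hg' : (support F q g).Nonempty := by simpa [support] using hg
  have hh' : (support F q h).Nonempty := by simpa [support] using hh
  obtain ⟨sg, hsg, hsg_max⟩ := Finset.exists_max_image _ degLexKey hg'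
  obtain ⟨mg, hmg, hmg_min⟩ := Finset.exists_min_image _ degLexKey hg'
  obtain ⟨sh, hsh, hsh_max⟩ := Finset.exists_max_image _ degLexKey hh'
  obtain ⟨mh, hmh, hmh_min⟩ := Finset.exists_min_image _ degLexKey hh'
  have htop := hgh _ (add_mem_support_mul hq hsg hsh
    (uniqueAdd_of_forall_degLexKey_le hsg_max hsh_max))
  have hbot := hgh _ (add_mem_support_mul hq hmg hmh
    (uniqueAdd_of_forall_le_degLexKey hmg_min hmh_min))
  simp only [Prod.fst_add, Prod.snd_add] at htop hbot
  have hg_le := fst_add_snd_le_of_degLexKey_le (hmg_min sg hsg)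
  have hh_le := fst_add_snd_le_of_degLexKey_le (hmh_min sh hsh)
  refine ⟨sg.1 + sg.2, sh.1 + sh.2, by omega, fun s hs => ?_, fun t ht => ?_⟩
  · have := fst_add_snd_le_of_degLexKey_le (hsg_max s hs)
    have := fst_add_snd_le_of_degLexKey_le (hmg_min s hs)
    omega
  · have := fst_add_snd_le_of_degLexKey_le (hsh_max t ht)
    have := fst_add_snd_le_of_degLexKey_le (hmh_min t ht)
    omega

theorem eq_sum_of_support_subset {g : QPlane F q} {S : Finset (ℕ × ℕ)}
    (hS : support F q g ⊆ S) : g = ∑ s ∈ S, (monomialBasis F q).repr g s • monomial F q s := by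
  conv_lhs => rw [← (monomialBasis F q).linearCombination_repr g]
  rw [Finsupp.linearCombination_apply, Finsupp.sum_of_support_subset _ hS _ (by simp)]
  simp

theorem IsHomogeneous.isConstQP {g : QPlane F q} (hg : IsHomogeneous F q g 0) :
    IsConstQP F q g := by
  have hS : support F q g ⊆ {(0, 0)} := fun s hs => by
    have := hg s hs
    simp only [Finset.mem_singleton, Prod.ext_iff]
    omega
  refine ⟨(monomialBasis F q).repr g (0, 0), ?_⟩
  conv_rhs => rw [eq_sum_of_support_subset hS]
  simp [monomial, Algebra.algebraMap_eq_smul_one]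

variable (F q) in
def linearForm (α β : F) : QPlane F q := α • Qx F q + β • Qy F q

variable (F q) in
def quadraticForm (a b c : F) : QPlane F q :=
  a • (Qx F q ^ 2) + b • (Qx F q * Qy F q) + c • (Qy F q ^ 2)

theorem IsHomogeneous.eq_linearForm {g : QPlane F q} (hg : IsHomogeneous F q g 1) :
    g = linearForm F q ((monomialBasis F q).repr g (1, 0))
      ((monomialBasis F q).repr g (0, 1)) := by
  have hS : support F q g ⊆ {(1, 0), (0, 1)} := fun s hs => by
    have := hg s hs
    simp only [Finset.mem_insert, Finset.mem_singleton, Prod.ext_iff]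
    omega
  conv_lhs => rw [eq_sum_of_support_subset hS, Finset.sum_pair (by simp)]
  simp [linearForm, monomial]

theorem linearForm_mul_linearForm (α β γ δ : F) :
    linearForm F q α β * linearForm F q γ δ =
      quadraticForm F q (α * γ) (α * δ + q * β * γ) (β * δ) := by
  simp only [linearForm, quadraticForm, mul_add, add_mul, smul_mul_smul_comm, Qy_mul_Qx,
    smul_smul, pow_two, add_smul]
  module

theorem repr_quadraticForm (a b c : F) :
    (monomialBasis F q).repr (quadraticForm F q a b c) =
      Finsupp.single (2, 0) a + Finsupp.single (1, 1) b + Finsupp.single (0, 2) c := by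
  have hx : Qx F q ^ 2 = monomial F q (2, 0) := by simp [monomial]
  have hxy : Qx F q * Qy F q = monomial F q (1, 1) := by simp [monomial]
  have hy : Qy F q ^ 2 = monomial F q (0, 2) := by simp [monomial]
  simp [quadraticForm, hx, hxy, hy, repr_monomial]

theorem quadraticForm_inj {a b c a' b' c' : F} :
    quadraticForm F q a b c = quadraticForm F q a' b' c' ↔ a = a' ∧ b = b' ∧ c = c' := by
  refine ⟨fun h => ?_, by rintro ⟨rfl, rfl, rfl⟩; rfl⟩
  have h := congrArg (monomialBasis F q).repr h
  rw [repr_quadraticForm, repr_quadraticForm] at h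
  refine ⟨?_, ?_, ?_⟩
  · simpa using DFunLike.congr_fun h (2, 0)
  · simpa using DFunLike.congr_fun h (1, 1)
  · simpa using DFunLike.congr_fun h (0, 2)

theorem isHomogeneous_quadraticForm (a b c : F) :
    IsHomogeneous F q (quadraticForm F q a b c) 2 := by
  rintro ⟨i, j⟩ hs
  rw [support, repr_quadraticForm, Finsupp.mem_support_iff] at hs
  simp only [Finsupp.add_apply, Finsupp.single_apply, Prod.mk.injEq] at hs
  split_ifs at hs <;> first | omega | simp at hs

theorem not_isConstQP_linearForm {α : F} (hα : α ≠ 0) (β : F) :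
    ¬IsConstQP F q (linearForm F q α β) := by
  rintro ⟨r, hr⟩
  have hx : Qx F q = monomial F q (1, 0) := by simp [monomial]
  have hy : Qy F q = monomial F q (0, 1) := by simp [monomial]
  have h1 : (1 : QPlane F q) = monomial F q (0, 0) := by simp [monomial]
  have := DFunLike.congr_fun (congrArg (monomialBasis F q).repr hr) (1, 0)
  simp [linearForm, Algebra.algebraMap_eq_smul_one, hx, hy, h1, repr_monomial] at this
  exact hα this.symm

theorem exists_linearForm_of_isHomogeneous_mul (hq : q ≠ 0) {g h : QPlane F q}
    (hg : ¬IsConstQP F q g) (hh : ¬IsConstQP F q h) (hgh : IsHomogeneous F q (g * h) 2) :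
    (∃ α β, g = linearForm F q α β) ∧ ∃ γ δ, h = linearForm F q γ δ := by
  have hg0 : g ≠ 0 := by rintro rfl; exact hg ⟨0, map_zero _⟩
  have hh0 : h ≠ 0 := by rintro rfl; exact hh ⟨0, map_zero _⟩
  obtain ⟨m, k, hmk, hgm, hhk⟩ := hgh.of_mul hq hg0 hh0
  obtain rfl : m = 1 := by
    have : m ≠ 0 := by rintro rfl; exact hg hgm.isConstQP
    have : k ≠ 0 := by rintro rfl; exact hh hhk.isConstQP
    omega
  obtain rfl : k = 1 := by omega
  exact ⟨⟨_, _, hgm.eq_linearForm⟩, ⟨_, _, hhk.eq_linearForm⟩⟩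

end QuantumPlane

open QuantumPlane

theorem stmt_1_general (F : Type) [Field F] [CharZero F] (q : F) (hq : q ≠ 0)
    (a b c : F) (ha : a ≠ 0) :
    IsReducibleQP F q
        (a • (Qx F q ^ 2) + b • (Qx F q * Qy F q) + c • (Qy F q ^ 2)) ↔
      ∃ d : F, d ^ 2 = b ^ 2 - 4 * a * c * q := by
  change IsReducibleQP F q (quadraticForm F q a b c) ↔ _
  constructor
  · rintro ⟨g, h, hg, hh, hgh⟩
    obtain ⟨⟨α, β, rfl⟩, ⟨γ, δ, rfl⟩⟩ :=
      exists_linearForm_of_isHomogeneous_mul hq hg hh (hgh ▸ isHomogeneous_quadraticForm a b c)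
    rw [linearForm_mul_linearForm, quadraticForm_inj] at hgh
    obtain ⟨rfl, rfl, rfl⟩ := hgh
    exact ⟨α * δ - q * β * γ, by ring⟩
  · rintro ⟨d, hd⟩
    refine ⟨linearForm F q 1 ((b - d) / (2 * q * a)), linearForm F q a ((b + d) / 2),
      not_isConstQP_linearForm one_ne_zero _, not_isConstQP_linearForm ha _, ?_⟩
    rw [linearForm_mul_linearForm, quadraticForm_inj]
    refine ⟨(one_mul a).symm, by field_simp; ring, ?_⟩
    field_simp
    linear_combination hd

theorem stmt_1 (F : Type) [Field F] [CharZero F] (q : F) (hq : q ≠ 0)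
    (a b c : F) (ha : a ≠ 0) (hc : c ≠ 0) :
    IsReducibleQP F q
        (a • (Qx F q ^ 2) + b • (Qx F q * Qy F q) + c • (Qy F q ^ 2)) ↔
      ∃ d : F, d ^ 2 = b ^ 2 - 4 * a * c * q :=
  stmt_1_general F q hq a b c ha
end
end

section
/- Let F be a field of characteristic zero and let q ∈ F be nonzero. Let σ be the F-algebra endomorphism of the quantum plane O_q(F²) determined by σ(x) = q⁻¹·x and σ(y) = y, and let τ be the F-algebra endomorphism determined by τ(x) = x and τ(y) = q⁻¹·y. If p ∈ O_q(F²) is prime, then there exist scalars λ, μ ∈ F such that σ(p) = λ·p and τ(p) = μ·p. -/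
noncomputable section

lemma qplane_rel (F : Type) [Field F] (q : F) :
    Qy F q * Qx F q = q • (Qx F q * Qy F q) := by
  have := RingQuot.mkAlgHom_rel F (QRel.rel (F := F) (q := q))
  simpa [Qx, Qy, map_mul, map_smul] using this

/-- The `F`-algebra endomorphism `σ` of `O_q(F²)` with `σ(x) = q⁻¹·x`, `σ(y) = y`. -/
def Qσ (F : Type) [Field F] (q : F) : QPlane F q →ₐ[F] QPlane F q :=
  RingQuot.liftAlgHom F
    ⟨FreeAlgebra.lift F ![q⁻¹ • Qx F q, Qy F q], by
      rintro a b ⟨⟩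
      simp only [map_mul, map_smul, FreeAlgebra.lift_ι_apply, Matrix.cons_val_zero,
        Matrix.cons_val_one, Matrix.head_cons]
      rw [mul_smul_comm, smul_mul_assoc, qplane_rel, smul_smul, smul_smul, mul_comm]⟩

/-- The `F`-algebra endomorphism `τ` of `O_q(F²)` with `τ(x) = x`, `τ(y) = q⁻¹·y`. -/
def Qτ (F : Type) [Field F] (q : F) : QPlane F q →ₐ[F] QPlane F q :=
  RingQuot.liftAlgHom F
    ⟨FreeAlgebra.lift F ![Qx F q, q⁻¹ • Qy F q], by
      rintro a b ⟨⟩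
      simp only [map_mul, map_smul, FreeAlgebra.lift_ι_apply, Matrix.cons_val_zero,
        Matrix.cons_val_one, Matrix.head_cons]
      rw [smul_mul_assoc, mul_smul_comm, qplane_rel, smul_smul, smul_smul, mul_comm]⟩

/-- `r` divides `s` if `s = r·t` or `s = t·r` for some `t`. -/
def EltDvd {R : Type} [Ring R] (r s : R) : Prop :=
  ∃ t : R, s = r * t ∨ s = t * r

/-- `r` is prime if `r ∣ s·t` implies `r ∣ s` or `r ∣ t`. -/
def IsPrimeElt {R : Type} [Ring R] (r : R) : Prop :=
  ∀ s t : R, EltDvd r (s * t) → EltDvd r s ∨ EltDvd r t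

/-!
Write elements of `O_q(F²)` in the monomial basis `x ^ i * y ^ j` and order exponents
lexicographically. Since `q ≠ 0`, the greatest and the least exponent of a product are the sums of
those of the factors. From `y * σ p = p * y` and `τ p * x = x * p`, a prime `p` divides `y` or
`σ p`, and divides `τ p` or `x`. A divisor of a monomial has equal greatest and least exponent, so
it is a multiple of a monomial, on which `σ` and `τ` act by scalars. If instead `p` divides `σ p`,
which has the same support as `p`, the cofactor has greatest exponent `0`, so it is a scalar; the
same goes for `τ`.
-/

lemma Module.Basis.repr_apply_of_apply_eq_smul {ι R M : Type*} [CommSemiring R]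
    [AddCommMonoid M] [Module R M] (b : Module.Basis ι R M) {f : M →ₗ[R] M} {χ : ι → R}
    (hf : ∀ i, f (b i) = χ i • b i) (x : M) (i : ι) : b.repr (f x) i = χ i * b.repr x i := by
  have : (b.coord i).comp f = χ i • b.coord i := b.ext fun j => by
    by_cases hij : i = j
    · subst hij
      simp [hf]
    · simp [hf, Ne.symm hij]
  exact LinearMap.congr_fun this x

namespace QPlane

variable {F : Type} [Field F] {q : F}

@[simp]
lemma Qσ_Qx : Qσ F q (Qx F q) = q⁻¹ • Qx F q := by
  simp [Qσ, Qx, RingQuot.liftAlgHom_mkAlgHom_apply]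

@[simp]
lemma Qσ_Qy : Qσ F q (Qy F q) = Qy F q := by
  simp [Qσ, Qy, RingQuot.liftAlgHom_mkAlgHom_apply]

@[simp]
lemma Qτ_Qx : Qτ F q (Qx F q) = Qx F q := by
  simp [Qτ, Qx, RingQuot.liftAlgHom_mkAlgHom_apply]

@[simp]
lemma Qτ_Qy : Qτ F q (Qy F q) = q⁻¹ • Qy F q := by
  simp [Qτ, Qy, RingQuot.liftAlgHom_mkAlgHom_apply]

@[elab_as_elim]
lemma induction_on {P : QPlane F q → Prop} (p : QPlane F q)
    (algebraMap : ∀ r : F, P (algebraMap F (QPlane F q) r))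
    (x : P (Qx F q)) (y : P (Qy F q))
    (mul : ∀ a b, P a → P b → P (a * b))
    (add : ∀ a b, P a → P b → P (a + b)) : P p := by
  obtain ⟨a, rfl⟩ := RingQuot.mkAlgHom_surjective F (QRel F q) p
  induction a using FreeAlgebra.induction with
  | grade0 r => rw [AlgHom.commutes]; exact algebraMap r
  | grade1 i =>
    fin_cases i
    · exact x
    · exact y
  | mul a b ha hb => rw [map_mul]; exact mul _ _ ha hb
  | add a b ha hb => rw [map_add]; exact add _ _ ha hb

lemma Qy_mul_Qσ (hq : q ≠ 0) (p : QPlane F q) : Qy F q * Qσ F q p = p * Qy F q := by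
  induction p using induction_on with
  | algebraMap r => rw [AlgHom.commutes, Algebra.commutes]
  | x => rw [Qσ_Qx, mul_smul_comm, qplane_rel, smul_smul, inv_mul_cancel₀ hq, one_smul]
  | y => rw [Qσ_Qy]
  | mul a b ha hb => rw [map_mul, ← mul_assoc, ha, mul_assoc, hb, mul_assoc]
  | add a b ha hb => rw [map_add, mul_add, ha, hb, add_mul]

lemma Qτ_mul_Qx (hq : q ≠ 0) (p : QPlane F q) : Qτ F q p * Qx F q = Qx F q * p := by
  induction p using induction_on with
  | algebraMap r => rw [AlgHom.commutes, Algebra.commutes]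
  | x => rw [Qτ_Qx]
  | y => rw [Qτ_Qy, smul_mul_assoc, qplane_rel, smul_smul, inv_mul_cancel₀ hq, one_smul]
  | mul a b ha hb => rw [map_mul, mul_assoc, hb, ← mul_assoc, ha, mul_assoc]
  | add a b ha hb => rw [map_add, add_mul, ha, hb, mul_add]

lemma Qy_pow_mul_Qx (j : ℕ) : Qy F q ^ j * Qx F q = q ^ j • (Qx F q * Qy F q ^ j) := by
  induction j with
  | zero => simp
  | succ j ih =>
    rw [pow_succ, mul_assoc, qplane_rel, mul_smul_comm, ← mul_assoc, ih, smul_mul_assoc,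
      smul_smul, ← pow_succ', mul_assoc]

lemma Qy_pow_mul_Qx_pow (j k : ℕ) :
    Qy F q ^ j * Qx F q ^ k = q ^ (j * k) • (Qx F q ^ k * Qy F q ^ j) := by
  induction k with
  | zero => simp
  | succ k ih =>
    rw [pow_succ, ← mul_assoc, ih, smul_mul_assoc, mul_assoc, Qy_pow_mul_Qx, mul_smul_comm,
      smul_smul, ← mul_assoc, ← pow_succ, ← pow_add, Nat.mul_succ]

variable (F q) in
def monomial (s : ℕ ×ₗ ℕ) : QPlane F q := Qx F q ^ (ofLex s).1 * Qy F q ^ (ofLex s).2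

@[simp]
lemma monomial_zero : monomial F q 0 = 1 := by simp [monomial]

lemma monomial_mul (s t : ℕ ×ₗ ℕ) :
    monomial F q s * monomial F q t
      = q ^ ((ofLex s).2 * (ofLex t).1) • monomial F q (s + t) := by
  simp only [monomial, ofLex_add, Prod.fst_add, Prod.snd_add, pow_add]
  rw [mul_assoc, ← mul_assoc (Qy F q ^ _), Qy_pow_mul_Qx_pow, smul_mul_assoc, mul_smul_comm,
    mul_assoc, ← mul_assoc, ← mul_assoc]

lemma Qσ_monomial (s : ℕ ×ₗ ℕ) :
    Qσ F q (monomial F q s) = q⁻¹ ^ (ofLex s).1 • monomial F q s := by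
  rw [monomial, map_mul, map_pow, map_pow, Qσ_Qx, Qσ_Qy, smul_pow, smul_mul_assoc]

lemma Qτ_monomial (s : ℕ ×ₗ ℕ) :
    Qτ F q (monomial F q s) = q⁻¹ ^ (ofLex s).2 • monomial F q s := by
  rw [monomial, map_mul, map_pow, map_pow, Qτ_Qx, Qτ_Qy, smul_pow, mul_smul_comm]

def coordMulX : ((ℕ ×ₗ ℕ) →₀ F) →ₗ[F] (ℕ ×ₗ ℕ) →₀ F :=
  Finsupp.linearCombination F fun s => Finsupp.single (s + toLex (1, 0)) 1

variable (q) in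
def coordMulY : ((ℕ ×ₗ ℕ) →₀ F) →ₗ[F] (ℕ ×ₗ ℕ) →₀ F :=
  Finsupp.linearCombination F fun s => q ^ (ofLex s).1 • Finsupp.single (s + toLex (0, 1)) 1

lemma coordMulX_single (s : ℕ ×ₗ ℕ) (c : F) :
    coordMulX (Finsupp.single s c) = Finsupp.single (s + toLex (1, 0)) c := by
  simp [coordMulX]

lemma coordMulY_single (s : ℕ ×ₗ ℕ) (c : F) :
    coordMulY q (Finsupp.single s c) = q ^ (ofLex s).1 • Finsupp.single (s + toLex (0, 1)) c := by
  rw [coordMulY, Finsupp.linearCombination_single, smul_comm, Finsupp.smul_single, smul_eq_mul,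
    mul_one]

variable (F q) in
/-- The left regular representation in the coordinates of the monomials; `monomial s` sends the
coordinates `single 0 1` of `1` to `single s 1`, which makes the monomials linearly independent. -/
def regularRep : QPlane F q →ₐ[F] Module.End F ((ℕ ×ₗ ℕ) →₀ F) :=
  RingQuot.liftAlgHom F
    ⟨FreeAlgebra.lift F ![coordMulX, coordMulY q], by
      rintro _ _ ⟨⟩
      simp only [map_mul, map_smul, FreeAlgebra.lift_ι_apply, Matrix.cons_val_zero,
        Matrix.cons_val_one]
      refine Finsupp.lhom_ext fun s c => ?_
      simp only [Module.End.mul_apply, LinearMap.smul_apply, coordMulX_single,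
        coordMulY_single, map_smul, smul_smul, ofLex_add, ofLex_toLex, Prod.fst_add,
        ← pow_succ']
      abel_nf⟩

@[simp]
lemma regularRep_Qx : regularRep F q (Qx F q) = coordMulX := by
  simp [regularRep, Qx, RingQuot.liftAlgHom_mkAlgHom_apply]

@[simp]
lemma regularRep_Qy : regularRep F q (Qy F q) = coordMulY q := by
  simp [regularRep, Qy, RingQuot.liftAlgHom_mkAlgHom_apply]

lemma regularRep_monomial (s : ℕ ×ₗ ℕ) :
    regularRep F q (monomial F q s) (Finsupp.single 0 1) = Finsupp.single s 1 := by
  have hx (i : ℕ) (t : ℕ ×ₗ ℕ) : (coordMulX ^ i) (Finsupp.single t (1 : F))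
      = Finsupp.single (t + toLex (i, 0)) 1 := by
    induction i with
    | zero => rfl
    | succ i ih =>
      rw [pow_succ', Module.End.mul_apply, ih, coordMulX_single, add_assoc, ← toLex_add]
      simp
  have hy (j : ℕ) : (coordMulY q ^ j) (Finsupp.single 0 (1 : F))
      = Finsupp.single (toLex (0, j)) 1 := by
    induction j with
    | zero => rfl
    | succ j ih =>
      rw [pow_succ', Module.End.mul_apply, ih, coordMulY_single, ← toLex_add]
      simp
  rw [monomial, map_mul, map_pow, map_pow, regularRep_Qx, regularRep_Qy, Module.End.mul_apply,
    hy, hx]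
  simp [← toLex_add]

lemma linearIndependent_monomial : LinearIndependent F (monomial F q) :=
  .of_comp ((LinearMap.applyₗ (Finsupp.single 0 1)).comp (regularRep F q).toLinearMap) <| by
    convert Finsupp.linearIndependent_single_one F (ℕ ×ₗ ℕ)
    exact regularRep_monomial _

lemma span_monomial : Submodule.span F (Set.range (monomial F q)) = ⊤ := by
  set S := Submodule.span F (Set.range (monomial F q))
  have monomial_mul_mem (s : ℕ ×ₗ ℕ) {v : QPlane F q} (hv : v ∈ S) : monomial F q s * v ∈ S := by
    induction hv using Submodule.span_induction with
    | mem _ h =>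
      obtain ⟨t, rfl⟩ := h
      rw [monomial_mul]
      exact S.smul_mem _ (Submodule.subset_span ⟨_, rfl⟩)
    | zero => simp
    | add _ _ _ _ h₁ h₂ => rw [mul_add]; exact S.add_mem h₁ h₂
    | smul c _ _ h => rw [mul_smul_comm]; exact S.smul_mem c h
  have mul_mem (p : QPlane F q) {v : QPlane F q} (hv : v ∈ S) : p * v ∈ S := by
    induction p using induction_on generalizing v with
    | algebraMap r =>
      rw [Algebra.algebraMap_eq_smul_one, smul_mul_assoc, one_mul]
      exact S.smul_mem r hv
    | x => simpa [monomial] using monomial_mul_mem (toLex (1, 0)) hv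
    | y => simpa [monomial] using monomial_mul_mem (toLex (0, 1)) hv
    | mul a b ha hb => rw [mul_assoc]; exact ha (hb hv)
    | add a b ha hb => rw [add_mul]; exact S.add_mem (ha hv) (hb hv)
  exact eq_top_iff.2 fun p _ => by
    simpa using mul_mem p (Submodule.subset_span ⟨0, monomial_zero⟩)

variable (F q) in
def monomialBasis : Module.Basis (ℕ ×ₗ ℕ) F (QPlane F q) :=
  .mk linearIndependent_monomial span_monomial.ge

@[simp]
lemma monomialBasis_apply (s : ℕ ×ₗ ℕ) : monomialBasis F q s = monomial F q s :=
  Module.Basis.mk_apply ..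

section Support

variable (p r : QPlane F q)

def support : Finset (ℕ ×ₗ ℕ) := ((monomialBasis F q).repr p).support

lemma mem_support {p : QPlane F q} {s : ℕ ×ₗ ℕ} :
    s ∈ support p ↔ (monomialBasis F q).repr p s ≠ 0 :=
  Finsupp.mem_support_iff

@[simp]
lemma repr_monomial (s : ℕ ×ₗ ℕ) :
    (monomialBasis F q).repr (monomial F q s) = Finsupp.single s 1 := by
  rw [← monomialBasis_apply, Module.Basis.repr_self]

lemma sum_support_repr_smul :
    ∑ s ∈ support p, (monomialBasis F q).repr p s • monomial F q s = p := by
  simpa [support, Finsupp.linearCombination_apply, Finsupp.sum] using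
    (monomialBasis F q).linearCombination_repr p

lemma repr_mul_apply (u : ℕ ×ₗ ℕ) :
    (monomialBasis F q).repr (p * r) u =
      ∑ st ∈ support p ×ˢ support r with st.1 + st.2 = u,
        (monomialBasis F q).repr p st.1 * (monomialBasis F q).repr r st.2
          * q ^ ((ofLex st.1).2 * (ofLex st.2).1) := by
  have expand : p * r = ∑ st ∈ support p ×ˢ support r,
      ((monomialBasis F q).repr p st.1 * (monomialBasis F q).repr r st.2
        * q ^ ((ofLex st.1).2 * (ofLex st.2).1)) • monomial F q (st.1 + st.2) := by
    conv_lhs => rw [← sum_support_repr_smul p, ← sum_support_repr_smul r]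
    simp only [Finset.sum_mul_sum, Finset.sum_product, smul_mul_smul_comm, monomial_mul, smul_smul]
  rw [expand, map_sum, Finsupp.finsetSum_apply, Finset.sum_filter]
  refine Finset.sum_congr rfl fun st _ => ?_
  simp only [map_smul, repr_monomial, Finsupp.smul_apply, Finsupp.single_apply, smul_eq_mul,
    mul_ite, mul_one, mul_zero]

variable {p r}

@[simp]
lemma support_monomial (s : ℕ ×ₗ ℕ) : support (monomial F q s) = {s} := by
  simp [support]

@[simp]
lemma support_zero : support (0 : QPlane F q) = ∅ := by
  simp [support]

lemma support_nonempty (hp : p ≠ 0) : (support p).Nonempty :=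
  Finsupp.support_nonempty_iff.2 ((monomialBasis F q).repr.map_ne_zero_iff.2 hp)

lemma exists_isGreatest_support (hp : p ≠ 0) : ∃ a, IsGreatest (support p : Set (ℕ ×ₗ ℕ)) a :=
  ⟨_, Finset.isGreatest_max' _ (support_nonempty hp)⟩

lemma exists_isLeast_support (hp : p ≠ 0) : ∃ a, IsLeast (support p : Set (ℕ ×ₗ ℕ)) a :=
  ⟨_, Finset.isLeast_min' _ (support_nonempty hp)⟩

lemma eq_smul_monomial_of_isGreatest_of_isLeast {a : ℕ ×ₗ ℕ}
    (hmax : IsGreatest (support p : Set (ℕ ×ₗ ℕ)) a) (hmin : IsLeast (support p : Set (ℕ ×ₗ ℕ)) a) :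
    p = (monomialBasis F q).repr p a • monomial F q a := by
  have hsub : support p ⊆ {a} := fun s hs =>
    Finset.mem_singleton.2 (le_antisymm (hmax.2 hs) (hmin.2 hs))
  conv_lhs => rw [← sum_support_repr_smul p]
  rw [Finset.sum_subset hsub fun s _ hs => by rw [mem_support, not_not] at hs; rw [hs, zero_smul],
    Finset.sum_singleton]

lemma exists_add_eq_of_mem_support_mul {u : ℕ ×ₗ ℕ} (hu : u ∈ support (p * r)) :
    ∃ s ∈ support p, ∃ t ∈ support r, s + t = u := by
  rw [mem_support, repr_mul_apply] at hu
  obtain ⟨st, hst, -⟩ := Finset.exists_ne_zero_of_sum_ne_zero hu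
  rw [Finset.mem_filter, Finset.mem_product] at hst
  exact ⟨st.1, hst.1.1, st.2, hst.1.2, hst.2⟩

lemma add_mem_support_mul (hq : q ≠ 0) {a b : ℕ ×ₗ ℕ} (ha : a ∈ support p) (hb : b ∈ support r)
    (huniq : ∀ s ∈ support p, ∀ t ∈ support r, s + t = a + b → s = a ∧ t = b) :
    a + b ∈ support (p * r) := by
  have hfilter : {st ∈ support p ×ˢ support r | st.1 + st.2 = a + b} = {(a, b)} := by
    ext ⟨s, t⟩
    simp only [Finset.mem_filter, Finset.mem_product, Finset.mem_singleton, Prod.mk.injEq]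
    constructor
    · rintro ⟨⟨hs, ht⟩, hst⟩
      exact huniq s hs t ht hst
    · rintro ⟨rfl, rfl⟩
      exact ⟨⟨ha, hb⟩, rfl⟩
  rw [mem_support, repr_mul_apply, hfilter, Finset.sum_singleton]
  exact mul_ne_zero (mul_ne_zero (mem_support.1 ha) (mem_support.1 hb)) (pow_ne_zero _ hq)

lemma isGreatest_support_mul (hq : q ≠ 0) {a b : ℕ ×ₗ ℕ}
    (ha : IsGreatest (support p : Set (ℕ ×ₗ ℕ)) a) (hb : IsGreatest (support r : Set (ℕ ×ₗ ℕ)) b) :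
    IsGreatest (support (p * r) : Set (ℕ ×ₗ ℕ)) (a + b) := by
  refine ⟨add_mem_support_mul hq ha.1 hb.1 fun s hs t ht hst =>
    (add_eq_add_iff_eq_and_eq (ha.2 hs) (hb.2 ht)).1 hst, fun u hu => ?_⟩
  obtain ⟨s, hs, t, ht, rfl⟩ := exists_add_eq_of_mem_support_mul hu
  exact add_le_add (ha.2 hs) (hb.2 ht)

lemma isLeast_support_mul (hq : q ≠ 0) {a b : ℕ ×ₗ ℕ}
    (ha : IsLeast (support p : Set (ℕ ×ₗ ℕ)) a) (hb : IsLeast (support r : Set (ℕ ×ₗ ℕ)) b) :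
    IsLeast (support (p * r) : Set (ℕ ×ₗ ℕ)) (a + b) := by
  refine ⟨add_mem_support_mul hq ha.1 hb.1 fun s hs t ht hst =>
    ((add_eq_add_iff_eq_and_eq (ha.2 hs) (hb.2 ht)).1 hst.symm).imp Eq.symm Eq.symm,
    fun u hu => ?_⟩
  obtain ⟨s, hs, t, ht, rfl⟩ := exists_add_eq_of_mem_support_mul hu
  exact add_le_add (ha.2 hs) (hb.2 ht)

lemma eq_smul_one_of_isGreatest_support_zero (h : IsGreatest (support p : Set (ℕ ×ₗ ℕ)) 0) :
    p = (monomialBasis F q).repr p 0 • 1 := by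
  simpa using eq_smul_monomial_of_isGreatest_of_isLeast h ⟨h.1, fun _ _ => bot_le⟩

end Support

section Divisibility

variable {p : QPlane F q}

lemma exists_eq_smul_monomial_of_mul_eq_monomial (hq : q ≠ 0) {r : QPlane F q} {w : ℕ ×ₗ ℕ}
    (h : p * r = monomial F q w) :
    (∃ (c : F) (a : ℕ ×ₗ ℕ), p = c • monomial F q a) ∧
      ∃ (c : F) (b : ℕ ×ₗ ℕ), r = c • monomial F q b := by
  have hw : p * r ≠ 0 := by simpa [h] using (monomialBasis F q).ne_zero w
  obtain ⟨a, ha⟩ := exists_isGreatest_support (left_ne_zero_of_mul hw)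
  obtain ⟨a', ha'⟩ := exists_isLeast_support (left_ne_zero_of_mul hw)
  obtain ⟨b, hb⟩ := exists_isGreatest_support (right_ne_zero_of_mul hw)
  obtain ⟨b', hb'⟩ := exists_isLeast_support (right_ne_zero_of_mul hw)
  have hmax : a + b = w := by simpa [h] using (isGreatest_support_mul hq ha hb).1
  have hmin : a' + b' = w := by simpa [h] using (isLeast_support_mul hq ha' hb').1
  obtain ⟨rfl, rfl⟩ := (add_eq_add_iff_eq_and_eq (ha'.2 ha.1) (hb'.2 hb.1)).1 (hmin.trans hmax.symm)
  exact ⟨⟨_, _, eq_smul_monomial_of_isGreatest_of_isLeast ha ha'⟩,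
    ⟨_, _, eq_smul_monomial_of_isGreatest_of_isLeast hb hb'⟩⟩

lemma exists_eq_smul_monomial_of_eltDvd_monomial (hq : q ≠ 0) {w : ℕ ×ₗ ℕ}
    (h : EltDvd p (monomial F q w)) : ∃ (c : F) (a : ℕ ×ₗ ℕ), p = c • monomial F q a := by
  obtain ⟨t, ht | ht⟩ := h
  · exact (exists_eq_smul_monomial_of_mul_eq_monomial hq ht.symm).1
  · exact (exists_eq_smul_monomial_of_mul_eq_monomial hq ht.symm).2

lemma exists_eq_smul_of_eltDvd_of_support_eq (hq : q ≠ 0) {w : QPlane F q}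
    (hd : EltDvd p w) (hsupp : support w = support p) : ∃ c : F, w = c • p := by
  by_cases hp : p = 0
  · obtain ⟨t, ht | ht⟩ := hd <;> exact ⟨0, by simp [ht, hp]⟩
  have hw : w ≠ 0 := by
    rintro rfl
    simpa [← hsupp] using support_nonempty hp
  obtain ⟨a, ha⟩ := exists_isGreatest_support hp
  rw [← hsupp] at ha
  obtain ⟨t, ht | ht⟩ := hd
  · obtain ⟨b, hb⟩ := exists_isGreatest_support (right_ne_zero_of_mul (ht ▸ hw))
    have hab : a + b = a := (isGreatest_support_mul hq (hsupp ▸ ha) hb).unique (ht ▸ ha)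
    rw [add_eq_left] at hab
    subst hab
    exact ⟨_, by rw [ht, eq_smul_one_of_isGreatest_support_zero hb, mul_smul_comm, mul_one]⟩
  · obtain ⟨b, hb⟩ := exists_isGreatest_support (left_ne_zero_of_mul (ht ▸ hw))
    have hab : b + a = a := (isGreatest_support_mul hq hb (hsupp ▸ ha)).unique (ht ▸ ha)
    rw [add_eq_right] at hab
    subst hab
    exact ⟨_, by rw [ht, eq_smul_one_of_isGreatest_support_zero hb, smul_mul_assoc, one_mul]⟩

end Divisibility

lemma support_eq_of_map_monomial {f : QPlane F q →ₗ[F] QPlane F q} {χ : ℕ ×ₗ ℕ → F}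
    (hχ : ∀ s, χ s ≠ 0) (hf : ∀ s, f (monomial F q s) = χ s • monomial F q s)
    (p : QPlane F q) : support (f p) = support p := by
  ext s
  rw [mem_support, mem_support, (monomialBasis F q).repr_apply_of_apply_eq_smul (by simpa using hf),
    mul_ne_zero_iff, and_iff_right (hχ s)]

lemma support_Qσ (hq : q ≠ 0) (p : QPlane F q) : support (Qσ F q p) = support p :=
  support_eq_of_map_monomial (f := (Qσ F q).toLinearMap) (fun _ => pow_ne_zero _ (inv_ne_zero hq))
    Qσ_monomial p

lemma support_Qτ (hq : q ≠ 0) (p : QPlane F q) : support (Qτ F q p) = support p :=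
  support_eq_of_map_monomial (f := (Qτ F q).toLinearMap) (fun _ => pow_ne_zero _ (inv_ne_zero hq))
    Qτ_monomial p

lemma exists_Qσ_eq_smul_and_Qτ_eq_smul_of_eltDvd_monomial (hq : q ≠ 0) {p : QPlane F q}
    {w : ℕ ×ₗ ℕ} (h : EltDvd p (monomial F q w)) :
    ∃ lam mu : F, Qσ F q p = lam • p ∧ Qτ F q p = mu • p := by
  obtain ⟨c, a, rfl⟩ := exists_eq_smul_monomial_of_eltDvd_monomial hq h
  exact ⟨_, _, by rw [map_smul, Qσ_monomial, smul_comm], by rw [map_smul, Qτ_monomial, smul_comm]⟩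

end QPlane

open QPlane in
theorem stmt_8_general (F : Type) [Field F] (q : F) (hq : q ≠ 0)
    (p : QPlane F q) (hp : IsPrimeElt p) :
    ∃ lam mu : F, Qσ F q p = lam • p ∧ Qτ F q p = mu • p := by
  rcases hp _ _ ⟨Qy F q, .inl (Qy_mul_Qσ hq p)⟩ with hy | hσ
  · exact exists_Qσ_eq_smul_and_Qτ_eq_smul_of_eltDvd_monomial hq (w := toLex (0, 1))
      (by simpa [monomial] using hy)
  rcases hp _ _ ⟨Qx F q, .inr (Qτ_mul_Qx hq p)⟩ with hτ | hx
  · obtain ⟨lam, hlam⟩ := exists_eq_smul_of_eltDvd_of_support_eq hq hσ (support_Qσ hq p)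
    obtain ⟨mu, hmu⟩ := exists_eq_smul_of_eltDvd_of_support_eq hq hτ (support_Qτ hq p)
    exact ⟨lam, mu, hlam, hmu⟩
  · exact exists_Qσ_eq_smul_and_Qτ_eq_smul_of_eltDvd_monomial hq (w := toLex (1, 0))
      (by simpa [monomial] using hx)

theorem stmt_8 (F : Type) [Field F] [CharZero F] (q : F) (hq : q ≠ 0)
    (p : QPlane F q) (hp : IsPrimeElt p) :
    ∃ lam mu : F, Qσ F q p = lam • p ∧ Qτ F q p = mu • p :=
  stmt_8_general F q hq p hp
end
end

section
/- Let F be a field of characteristic zero and let q ∈ F be nonzero. Then the generators x and y of the quantum plane O_q(F²) are prime elements. -/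
noncomputable section

namespace QAux

variable {F : Type} [Field F] {R : Type} [Ring R] [Algebra F R]

lemma pow_comm_aux (u w : R) (c : F) (h : u * w = c • (w * u)) (n : ℕ) :
    u ^ n * w = c ^ n • (w * u ^ n) := by
  induction n with
  | zero => simp
  | succ n ih =>
    rw [pow_succ', mul_assoc, ih, mul_smul_comm, ← mul_assoc, h, smul_mul_assoc,
      smul_smul, mul_assoc, ← pow_succ', pow_succ, mul_comm (c ^ n) c]
    rw [← pow_succ']

lemma aeval_comm_aux (u w : R) (c : F) (h : u * w = c • (w * u)) (p : Polynomial F) :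
    (Polynomial.aeval u p) * w = w * (Polynomial.aeval (c • u) p) := by
  induction p using Polynomial.induction_on' with
  | add p r hp hr => simp [add_mul, mul_add, hp, hr]
  | monomial n a =>
    rw [Polynomial.aeval_monomial, Polynomial.aeval_monomial, smul_pow,
      mul_assoc, pow_comm_aux u w c h n, mul_smul_comm, mul_smul_comm, ← mul_assoc,
      Algebra.commutes a w, mul_assoc, mul_smul_comm]

variable (F) (q : F)

lemma rel_yx : Qy F q * Qx F q = q • (Qx F q * Qy F q) := by
  rw [Qx, Qy, ← map_mul, ← map_mul, ← map_smul]
  exact RingQuot.mkAlgHom_rel F (QRel.rel)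

lemma rel_xy (hq : q ≠ 0) : Qx F q * Qy F q = q⁻¹ • (Qy F q * Qx F q) := by
  rw [rel_yx, smul_smul, inv_mul_cancel₀ hq, one_smul]

/-- Projection killing `x`. -/
def piX : QPlane F q →ₐ[F] Polynomial F :=
  RingQuot.liftAlgHom F ⟨FreeAlgebra.lift F (fun i => if i = 0 then 0 else Polynomial.X), by
    rintro a b ⟨⟩; simp⟩

/-- Projection killing `y`. -/
def piY : QPlane F q →ₐ[F] Polynomial F :=
  RingQuot.liftAlgHom F ⟨FreeAlgebra.lift F (fun i => if i = 0 then Polynomial.X else 0), by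
    rintro a b ⟨⟩; simp⟩

@[simp] lemma piX_x : piX F q (Qx F q) = 0 := by
  rw [piX, Qx, RingQuot.liftAlgHom_mkAlgHom_apply]; simp

@[simp] lemma piX_y : piX F q (Qy F q) = Polynomial.X := by
  rw [piX, Qy, RingQuot.liftAlgHom_mkAlgHom_apply]; simp

@[simp] lemma piY_x : piY F q (Qx F q) = Polynomial.X := by
  rw [piY, Qx, RingQuot.liftAlgHom_mkAlgHom_apply]; simp

@[simp] lemma piY_y : piY F q (Qy F q) = 0 := by
  rw [piY, Qy, RingQuot.liftAlgHom_mkAlgHom_apply]; simp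

lemma decompX (s : QPlane F q) :
    ∃ (p : Polynomial F) (t : QPlane F q),
      s = Polynomial.aeval (Qy F q) p + Qx F q * t := by
  obtain ⟨a, rfl⟩ := RingQuot.mkAlgHom_surjective F (QRel F q) s
  induction a using FreeAlgebra.induction with
  | grade0 r =>
    exact ⟨Polynomial.C r, 0, by simp [Algebra.algebraMap_eq_smul_one, map_smul]⟩
  | grade1 i =>
    fin_cases i
    · exact ⟨0, 1, by simp [Qx]⟩
    · exact ⟨Polynomial.X, 0, by simp [Qy]⟩
  | add a b ha hb =>
    obtain ⟨p, t, hp⟩ := ha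
    obtain ⟨p', t', hp'⟩ := hb
    exact ⟨p + p', t + t', by rw [map_add, hp, hp', map_add, mul_add]; abel⟩
  | mul a b ha hb =>
    obtain ⟨p, t, hp⟩ := ha
    obtain ⟨p', t', hp'⟩ := hb
    refine ⟨p * p',
      Polynomial.aeval (q • Qy F q) p * t' +
        t * (Polynomial.aeval (Qy F q) p' + Qx F q * t'), ?_⟩
    rw [map_mul, hp, hp', map_mul]
    have hc := aeval_comm_aux (Qy F q) (Qx F q) q (rel_yx F q) p
    rw [add_mul, mul_add, mul_add, ← mul_assoc (Polynomial.aeval (Qy F q) p), hc]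
    noncomm_ring

lemma decompY (hq : q ≠ 0) (s : QPlane F q) :
    ∃ (p : Polynomial F) (t : QPlane F q),
      s = Polynomial.aeval (Qx F q) p + Qy F q * t := by
  obtain ⟨a, rfl⟩ := RingQuot.mkAlgHom_surjective F (QRel F q) s
  induction a using FreeAlgebra.induction with
  | grade0 r =>
    exact ⟨Polynomial.C r, 0, by simp [Algebra.algebraMap_eq_smul_one, map_smul]⟩
  | grade1 i =>
    fin_cases i
    · exact ⟨Polynomial.X, 0, by simp [Qx]⟩
    · exact ⟨0, 1, by simp [Qy]⟩
  | add a b ha hb =>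
    obtain ⟨p, t, hp⟩ := ha
    obtain ⟨p', t', hp'⟩ := hb
    exact ⟨p + p', t + t', by rw [map_add, hp, hp', map_add, mul_add]; abel⟩
  | mul a b ha hb =>
    obtain ⟨p, t, hp⟩ := ha
    obtain ⟨p', t', hp'⟩ := hb
    refine ⟨p * p',
      Polynomial.aeval (q⁻¹ • Qx F q) p * t' +
        t * (Polynomial.aeval (Qx F q) p' + Qy F q * t'), ?_⟩
    rw [map_mul, hp, hp', map_mul]
    have hc := aeval_comm_aux (Qx F q) (Qy F q) q⁻¹ (rel_xy F q hq) p
    rw [add_mul, mul_add, mul_add, ← mul_assoc (Polynomial.aeval (Qx F q) p), hc]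
    noncomm_ring

lemma dvdX_iff (s : QPlane F q) : EltDvd (Qx F q) s ↔ piX F q s = 0 := by
  constructor
  · rintro ⟨t, rfl | rfl⟩ <;> simp [map_mul]
  · intro h
    obtain ⟨p, t, rfl⟩ := decompX F q s
    have : p = 0 := by
      have := h
      rwa [map_add, map_mul, piX_x, zero_mul, add_zero,
        ← Polynomial.aeval_algHom_apply, piX_y, Polynomial.aeval_X_left_apply] at this
    subst this
    exact ⟨t, Or.inl (by simp)⟩

lemma dvdY_iff (hq : q ≠ 0) (s : QPlane F q) :
    EltDvd (Qy F q) s ↔ piY F q s = 0 := by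
  constructor
  · rintro ⟨t, rfl | rfl⟩ <;> simp [map_mul]
  · intro h
    obtain ⟨p, t, rfl⟩ := decompY F q hq s
    have : p = 0 := by
      have := h
      rwa [map_add, map_mul, piY_y, zero_mul, add_zero,
        ← Polynomial.aeval_algHom_apply, piY_x, Polynomial.aeval_X_left_apply] at this
    subst this
    exact ⟨t, Or.inl (by simp)⟩

end QAux

theorem stmt_9 (F : Type) [Field F] [CharZero F] (q : F) (hq : q ≠ 0) :
    IsPrimeElt (Qx F q) ∧ IsPrimeElt (Qy F q) := by
  constructor
  · intro s t h
    rw [QAux.dvdX_iff F q, QAux.dvdX_iff F q]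
    rw [QAux.dvdX_iff F q, map_mul] at h
    exact mul_eq_zero.mp h
  · intro s t h
    rw [QAux.dvdY_iff F q hq, QAux.dvdY_iff F q hq]
    rw [QAux.dvdY_iff F q hq, map_mul] at h
    exact mul_eq_zero.mp h
end
end

section
/- Let F be a subfield of ℝ, let q ∈ F be nonzero with q ≠ 1 and q ≠ −1, and let a, b, c ∈ F satisfy b² − 4·a·c·q < 0 (as real numbers). Then the quadratic form f = a·x² + b·x·y + c·y² is not a prime element of the quantum plane O_q(F²). -/
noncomputable section

/-! The quadratic form `f` quasi-commutes with `x`: `f * x = x * g` with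
`g = a x² + q b xy + q² c y²`, so a prime `f` would divide `x` or `g`.
Specialising `y ↦ 0` (resp. `x ↦ 0`) sends the quantum plane to `F[X]`, where `f` and `g` become
`a X²` and `a X²` (resp. `c X²` and `q² c X²`). So `f ∤ x` by degree, and `g = f t` (or `t f`) would force
`t` to have constant term both `1` and `q²`. -/

open Polynomial

namespace QPlane

variable {F : Type} [Field F] {q : F}

theorem y_mul_x : Qy F q * Qx F q = q • (Qx F q * Qy F q) := by
  have h := RingQuot.mkAlgHom_rel F (QRel.rel (F := F) (q := q))
  rwa [map_mul, map_smul, map_mul] at h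

theorem algHom_ext {A : Type} [Semiring A] [Algebra F A] {φ ψ : QPlane F q →ₐ[F] A}
    (hx : φ (Qx F q) = ψ (Qx F q)) (hy : φ (Qy F q) = ψ (Qy F q)) : φ = ψ := by
  refine RingQuot.ringQuot_ext' F φ ψ (FreeAlgebra.hom_ext (funext fun i => ?_))
  fin_cases i
  exacts [hx, hy]

def lift {A : Type} [Semiring A] [Algebra F A] (u v : A) (h : v * u = q • (u * v)) :
    QPlane F q →ₐ[F] A :=
  RingQuot.liftAlgHom F ⟨FreeAlgebra.lift F ![u, v], by rintro _ _ ⟨⟩; simp [h]⟩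

section Lift

variable {A : Type} [Semiring A] [Algebra F A] (u v : A) (h : v * u = q • (u * v))

@[simp]
theorem lift_x : lift u v h (Qx F q) = u := by
  simp [lift, Qx]

@[simp]
theorem lift_y : lift u v h (Qy F q) = v := by
  simp [lift, Qy]

end Lift

def quadForm (q a b c : F) : QPlane F q :=
  a • Qx F q ^ 2 + b • (Qx F q * Qy F q) + c • Qy F q ^ 2

theorem quadForm_mul_x (a b c : F) :
    quadForm q a b c * Qx F q = Qx F q * quadForm q a (q * b) (q ^ 2 * c) := by
  have hxy : Qx F q * Qy F q * Qx F q = q • (Qx F q * (Qx F q * Qy F q)) := by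
    rw [mul_assoc, y_mul_x, mul_smul_comm, ← mul_assoc]
  have hyy : Qy F q ^ 2 * Qx F q = q ^ 2 • (Qx F q * Qy F q ^ 2) := by
    rw [sq, sq, mul_assoc, y_mul_x, mul_smul_comm, ← mul_assoc, y_mul_x, smul_mul_assoc,
      smul_smul, mul_assoc]
  simp only [quadForm, add_mul, mul_add, smul_mul_assoc, mul_smul_comm, hxy, hyy,
    ← pow_succ, ← pow_succ']
  module

def evalX : QPlane F q →ₐ[F] F[X] := lift X 0 (by simp)

def evalY : QPlane F q →ₐ[F] F[X] := lift 0 X (by simp)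

theorem evalX_quadForm (a b c : F) : evalX (quadForm q a b c) = C a * X ^ 2 := by
  simp [evalX, quadForm, smul_eq_C_mul]

theorem evalY_quadForm (a b c : F) : evalY (quadForm q a b c) = C c * X ^ 2 := by
  simp [evalY, quadForm, smul_eq_C_mul]

theorem eval_zero_evalX_eq_eval_zero_evalY (p : QPlane F q) : (evalX p).eval 0 = (evalY p).eval 0 := by
  have h : (aeval (0 : F)).comp (evalX (q := q)) = (aeval (0 : F)).comp evalY :=
    algHom_ext (by simp [evalX, evalY]) (by simp [evalX, evalY])
  simpa using DFunLike.congr_fun h p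

theorem not_eltDvd_quadForm_x {a : F} (ha : a ≠ 0) (b c : F) :
    ¬ EltDvd (quadForm q a b c) (Qx F q) := by
  rintro ⟨t, ht⟩
  have hdvd : C a * X ^ 2 ∣ (X : F[X]) := by
    rcases ht with ht | ht <;> rw [← evalX_quadForm a b c]
    · exact ⟨evalX t, by rw [← map_mul, ← ht, evalX, lift_x]⟩
    · exact Dvd.intro_left (evalX t) (by rw [← map_mul, ← ht, evalX, lift_x])
  have := natDegree_le_of_dvd hdvd X_ne_zero
  rw [natDegree_C_mul_X_pow 2 a ha, natDegree_X] at this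
  omega

theorem not_eltDvd_quadForm_quadForm {a c : F} (ha : a ≠ 0) (hc : c ≠ 0) (hq : q ^ 2 ≠ 1)
    (b : F) : ¬ EltDvd (quadForm q a b c) (quadForm q a (q * b) (q ^ 2 * c)) := by
  rintro ⟨t, ht⟩
  have hmap : ∀ φ : QPlane F q →ₐ[F] F[X],
      φ (quadForm q a (q * b) (q ^ 2 * c)) = φ (quadForm q a b c) * φ t := by
    intro φ
    rcases ht with ht | ht
    · rw [ht, map_mul]
    · rw [ht, map_mul, mul_comm]
  have hX : evalX t = 1 := by
    have := hmap evalX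
    rw [evalX_quadForm, evalX_quadForm] at this
    exact (mul_eq_left₀ (by simp [ha])).mp this.symm
  have hY : evalY t = C (q ^ 2) := by
    have := hmap evalY
    rw [evalY_quadForm, evalY_quadForm] at this
    refine (mul_left_cancel₀ (a := C c * X ^ 2) (by simp [hc]) ?_).symm
    rw [← this, C_mul]
    ring
  apply hq
  simpa [hX, hY] using (eval_zero_evalX_eq_eval_zero_evalY t).symm

theorem not_isPrimeElt_quadForm {a c : F} (ha : a ≠ 0) (hc : c ≠ 0) (hq : q ^ 2 ≠ 1) (b : F) :
    ¬ IsPrimeElt (quadForm q a b c) := fun hprime =>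
  (hprime _ _ ⟨Qx F q, .inl (quadForm_mul_x a b c).symm⟩).elim
    (not_eltDvd_quadForm_x ha b c) (not_eltDvd_quadForm_quadForm ha hc hq b)

end QPlane

theorem stmt_14_general (F : Subfield ℝ) (q a b c : F)
    (hq1 : q ≠ 1) (hqm1 : q ≠ -1)
    (hdisc : (b : ℝ) ^ 2 - 4 * (a : ℝ) * (c : ℝ) * (q : ℝ) < 0) :
    ¬ IsPrimeElt
        (a • (Qx F q ^ 2) + b • (Qx F q * Qy F q) + c • (Qy F q ^ 2)) := by
  have ha : a ≠ 0 := by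
    rintro rfl
    push_cast at hdisc
    nlinarith [sq_nonneg (b : ℝ)]
  have hc : c ≠ 0 := by
    rintro rfl
    push_cast at hdisc
    nlinarith [sq_nonneg (b : ℝ)]
  have hq : q ^ 2 ≠ 1 := by
    rw [Ne, sq_eq_one_iff, not_or]
    exact ⟨hq1, hqm1⟩
  exact QPlane.not_isPrimeElt_quadForm ha hc hq b

theorem stmt_14 (F : Subfield ℝ) (q a b c : F) (hq : q ≠ 0)
    (hq1 : q ≠ 1) (hqm1 : q ≠ -1)
    (hdisc : (b : ℝ) ^ 2 - 4 * (a : ℝ) * (c : ℝ) * (q : ℝ) < 0) :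
    ¬ IsPrimeElt
        (a • (Qx F q ^ 2) + b • (Qx F q * Qy F q) + c • (Qy F q ^ 2)) :=
  stmt_14_general F q a b c hq1 hqm1 hdisc
end
end
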